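/- arXiv:1202.0190 — 2 statements merged into one kernel-verified Lean document; each statement's English description precedes it below -/
import Mathlib

section
/- For every integer n ≥ 4 and every real z with z ≥ -(1/4)·log n, one has exp(-e^{-z}) - n^{-1/2} ≤ (1 - e^{-z}/n)^n ≤ exp(-e^{-z}). -/
/-!
With t = e^{-z} the hypothesis gives t ≤ n, so the upper bound is (1 - t/n)^n ≤ e^{-t}. For the
lower bound, e^{-y}(1 + y) ≤ 1 gives e^{-y}(1 - y²) ≤ 1 - y for y ≤ 1, and Bernoulli's inequality
turns the n-th power of this into e^{-t}(1 - t²/n) ≤ (1 - t/n)^n. The error term t²e^{-t}/n is at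
most 2/n because t²/2 ≤ e^t, and 2/n ≤ n^{-1/2} as soon as n ≥ 4.
-/

open Real

namespace Real

lemma exp_neg_mul_one_sub_sq_le_one_sub {y : ℝ} (hy : y ≤ 1) :
    exp (-y) * (1 - y ^ 2) ≤ 1 - y := by
  have h : exp (-y) * (1 + y) ≤ 1 := by
    simpa [exp_neg, ← div_eq_inv_mul, div_le_one (exp_pos y), add_comm] using add_one_le_exp y
  calc exp (-y) * (1 - y ^ 2) = exp (-y) * (1 + y) * (1 - y) := by ring
    _ ≤ 1 - y := mul_le_of_le_one_left (by linarith) h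

lemma exp_neg_mul_one_sub_mul_sq_le_one_sub_pow {y : ℝ} (hy₀ : -1 ≤ y) (hy₁ : y ≤ 1) (n : ℕ) :
    exp (-(n * y)) * (1 - n * y ^ 2) ≤ (1 - y) ^ n := by
  have hbernoulli : 1 - n * y ^ 2 ≤ (1 - y ^ 2) ^ n := by
    simpa [sub_eq_add_neg] using one_add_mul_le_pow (a := -y ^ 2) (by nlinarith) n
  calc exp (-(n * y)) * (1 - n * y ^ 2) ≤ exp (-y) ^ n * (1 - y ^ 2) ^ n := by
        rw [← exp_nat_mul, mul_neg]
        gcongr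
    _ = (exp (-y) * (1 - y ^ 2)) ^ n := (mul_pow _ _ _).symm
    _ ≤ (1 - y) ^ n := by
        gcongr
        · exact mul_nonneg (exp_pos _).le (by nlinarith)
        · exact exp_neg_mul_one_sub_sq_le_one_sub hy₁

lemma exp_neg_mul_one_sub_sq_div_le_one_sub_div_pow {n : ℕ} {t : ℝ} (ht₀ : -n ≤ t)
    (htn : t ≤ n) : exp (-t) * (1 - t ^ 2 / n) ≤ (1 - t / n) ^ n := by
  rcases n.eq_zero_or_pos with rfl | hn
  · simpa using ht₀
  have hn' : (0 : ℝ) < n := Nat.cast_pos.mpr hn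
  have h := exp_neg_mul_one_sub_mul_sq_le_one_sub_pow ((le_div_iff₀ hn').mpr (by linarith))
    ((div_le_one hn').mpr htn) n
  have hsq : (n : ℝ) * (t / n) ^ 2 = t ^ 2 / n := by field_simp
  rwa [mul_div_cancel₀ t hn'.ne', hsq] at h

lemma sq_mul_exp_neg_le_two {t : ℝ} (ht : 0 ≤ t) : t ^ 2 * exp (-t) ≤ 2 := by
  rw [exp_neg, ← div_eq_mul_inv, div_le_iff₀ (exp_pos t)]
  nlinarith [quadratic_le_exp_of_nonneg ht]

lemma two_div_le_rpow_neg_half {x : ℝ} (hx : 4 ≤ x) : 2 / x ≤ x ^ (-(1 / 2 : ℝ)) := by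
  have hx₀ : 0 < x := by linarith
  have hsqrt : 2 ≤ √x := (le_sqrt zero_le_two (by linarith)).mpr (by linarith)
  rw [rpow_neg hx₀.le, ← sqrt_eq_rpow, div_le_iff₀ hx₀]
  nth_rewrite 2 [← mul_self_sqrt hx₀.le]
  rwa [← mul_assoc, inv_mul_cancel₀ (by positivity), one_mul]

end Real

theorem one_sub_exp_div_pow_bounds (n : ℕ) (hn : 4 ≤ n) (z : ℝ)
    (hz : -(1 / 4) * Real.log n ≤ z) :
    Real.exp (-Real.exp (-z)) - (n : ℝ) ^ (-(1 / 2 : ℝ)) ≤ (1 - Real.exp (-z) / n) ^ n ∧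
      (1 - Real.exp (-z) / n) ^ n ≤ Real.exp (-Real.exp (-z)) := by
  set t := exp (-z)
  have hn₄ : (4 : ℝ) ≤ n := by exact_mod_cast hn
  have hn₀ : (0 : ℝ) < n := by linarith
  have hlog : 0 ≤ log n := log_nonneg (by linarith)
  have htn : t ≤ n := by
    calc t ≤ exp (log n) := exp_le_exp.mpr (by linarith)
      _ = n := exp_log hn₀
  refine ⟨?_, one_sub_div_pow_le_exp_neg htn⟩
  have herror : t ^ 2 / n * exp (-t) ≤ 2 / n := by
    rw [div_mul_eq_mul_div, mul_comm]
    gcongr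
    simpa [mul_comm] using sq_mul_exp_neg_le_two (exp_pos (-z)).le
  calc exp (-t) - (n : ℝ) ^ (-(1 / 2 : ℝ)) ≤ exp (-t) - t ^ 2 / n * exp (-t) := by
        linarith [two_div_le_rpow_neg_half hn₄]
    _ = exp (-t) * (1 - t ^ 2 / n) := by ring
    _ ≤ (1 - t / n) ^ n :=
        exp_neg_mul_one_sub_sq_div_le_one_sub_div_pow (by linarith [exp_pos (-z)]) htn
end

section
/- Let λ > 0 and 0 < r < e^{-1} satisfy Σ_{i≥2} r^{i-1}(e^i - 1) ≤ 1/4. Let N be a Poisson random variable with mean λ, and let (N_i)_{i≥2} be independent Poisson random variables, independent of N, such that the mean of N_i is at most λ·r^{i-1}. Then P[Σ_{i≥2} i·N_i ≤ N] ≥ 1 - e^{-λ/8} - e^{-λ/4}. -/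
/-!
Chernoff's bound with `t = 1` and independence give, for every `n`,
`P[Σ_{2≤i<n} i N_i ≥ λ/2] ≤ e^{-λ/2} ∏ E[e^{i N_i}] = exp (Σ λ_i (e^i - 1) - λ/2) ≤ e^{-λ/4}`;
these events increase in `n`, so the same bound holds for their union.
Chernoff's bound with `t = -1` gives `P[N < λ/2] ≤ exp (λ/2 + λ (e⁻¹ - 1)) ≤ e^{-λ/8}`,
as `e⁻¹ ≤ 3/8`. Outside both events every partial sum is below `λ/2 ≤ N`, hence so is the
whole series.
-/

open MeasureTheory ProbabilityTheory Real Finset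
open scoped NNReal

lemma hasSum_exp_mul_poissonMeasure (r : ℝ≥0) (t : ℝ) :
    HasSum (fun n : ℕ => (exp (-r) * r ^ n / n.factorial) * exp (t * n))
      (exp (r * (exp t - 1))) := by
  have h := (NormedSpace.expSeries_div_hasSum_exp (r * exp t : ℝ)).mul_left (exp (-r))
  rw [← exp_eq_exp_ℝ, ← exp_add, show -(r : ℝ) + r * exp t = r * (exp t - 1) by ring] at h
  refine h.congr_fun fun n => ?_
  rw [mul_pow, ← exp_nat_mul, mul_comm (n : ℝ) t]
  ring

lemma integrable_exp_mul_poissonMeasure (r : ℝ≥0) (t : ℝ) :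
    Integrable (fun n : ℕ => exp (t * n)) (poissonMeasure r) := by
  rw [integrable_poissonMeasure_iff]
  simpa only [norm_of_nonneg (exp_nonneg _)] using (hasSum_exp_mul_poissonMeasure r t).summable

lemma integral_exp_mul_poissonMeasure (r : ℝ≥0) (t : ℝ) :
    ∫ n : ℕ, exp (t * n) ∂(poissonMeasure r) = exp (r * (exp t - 1)) := by
  rw [integral_poissonMeasure]
  exact (hasSum_exp_mul_poissonMeasure r t).tsum_eq

namespace ProbabilityTheory

variable {Ω : Type*} [MeasurableSpace Ω] {P : Measure Ω}

section PoissonLaw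

variable {M : Ω → ℕ}

lemma hasLaw_poissonMeasure_of_measure_eq (hM : Measurable M) {μ : ℝ} (hμ : 0 ≤ μ)
    (h : ∀ k : ℕ, P {ω | M ω = k} = ENNReal.ofReal (exp (-μ) * μ ^ k / k.factorial)) :
    HasLaw M (poissonMeasure μ.toNNReal) P where
  aemeasurable := hM.aemeasurable
  map_eq := Measure.ext_of_singleton fun k => by
    rw [Measure.map_apply hM (measurableSet_singleton k), poissonMeasure_singleton,
      Real.coe_toNNReal _ hμ]
    exact h k

variable {r : ℝ≥0}

lemma HasLaw.integrable_exp_mul_of_poissonMeasure (h : HasLaw M (poissonMeasure r) P) (t : ℝ) :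
    Integrable (fun ω => exp (t * M ω)) P := by
  have := integrable_exp_mul_poissonMeasure r t
  rwa [← h.map_eq, integrable_map_measure .of_discrete h.aemeasurable] at this

lemma HasLaw.mgf_of_poissonMeasure (h : HasLaw M (poissonMeasure r) P) (t : ℝ) :
    mgf (fun ω => (M ω : ℝ)) P t = exp (r * (exp t - 1)) :=
  (h.integral_comp (f := fun n : ℕ => exp (t * n)) .of_discrete).trans
    (integral_exp_mul_poissonMeasure r t)

lemma HasLaw.mgf_const_mul_le_of_poissonMeasure (h : HasLaw M (poissonMeasure r) P) {c b : ℝ}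
    (hc : 0 ≤ c) (hrb : r ≤ b) :
    mgf (fun ω => c * M ω) P 1 ≤ exp (b * (exp c - 1)) := by
  rw [mgf_const_mul, mul_one, h.mgf_of_poissonMeasure]
  exact exp_le_exp.2 (mul_le_mul_of_nonneg_right hrb (sub_nonneg.2 (one_le_exp hc)))

lemma HasLaw.measure_lt_half_le_of_poissonMeasure (h : HasLaw M (poissonMeasure r) P) :
    P {ω | (M ω : ℝ) < r / 2} ≤ ENNReal.ofReal (exp (-r / 8)) := by
  have := h.isProbabilityMeasure
  have hchernoff := measure_le_le_exp_mul_mgf (X := fun ω => (M ω : ℝ)) (μ := P) (r / 2)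
    (neg_nonpos.2 zero_le_one) (h.integrable_exp_mul_of_poissonMeasure (-1))
  rw [h.mgf_of_poissonMeasure, ← exp_add] at hchernoff
  refine (measure_mono fun ω (hω : (M ω : ℝ) < r / 2) => hω.le).trans
    ((ENNReal.le_ofReal_iff_toReal_le (measure_ne_top _ _) (exp_nonneg _)).2
      (hchernoff.trans (exp_le_exp.2 ?_)))
  nlinarith [exp_neg_one_lt_d9, r.2]

end PoissonLaw

section SeriesTail

variable {X : ℕ → Ω → ℝ} {a : ℕ → ℝ}

lemma iIndepFun.measure_ge_sum_range_le (hX : iIndepFun X P) (hmeas : ∀ j, Measurable (X j))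
    (hint : ∀ j, Integrable (fun ω => exp (X j ω)) P) (hmgf : ∀ j, mgf (X j) P 1 ≤ exp (a j))
    (n : ℕ) (ε : ℝ) :
    P {ω | ε ≤ ∑ j ∈ range n, X j ω} ≤ ENNReal.ofReal (exp (∑ j ∈ range n, a j - ε)) := by
  have := hX.isProbabilityMeasure
  have hint_sum := hX.integrable_exp_mul_sum (t := 1) hmeas (s := range n)
    fun j _ => by simpa only [one_mul] using hint j
  have hchernoff := measure_ge_le_exp_mul_mgf ε zero_le_one hint_sum
  simp only [Finset.sum_apply] at hchernoff
  rw [hX.mgf_sum hmeas] at hchernoff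
  refine (ENNReal.le_ofReal_iff_toReal_le (measure_ne_top _ _) (exp_nonneg _)).2
    (hchernoff.trans ?_)
  calc exp (-1 * ε) * ∏ j ∈ range n, mgf (X j) P 1
      ≤ exp (-1 * ε) * ∏ j ∈ range n, exp (a j) := by
        gcongr with j
        · exact fun j _ => mgf_nonneg
        · exact hmgf j
    _ = exp (∑ j ∈ range n, a j - ε) := by
        rw [← exp_sum, ← exp_add]
        ring_nf

lemma iIndepFun.measure_iUnion_ge_sum_range_le (hX : iIndepFun X P)
    (hmeas : ∀ j, Measurable (X j)) (hnonneg : ∀ j ω, 0 ≤ X j ω)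
    (hint : ∀ j, Integrable (fun ω => exp (X j ω)) P) (hmgf : ∀ j, mgf (X j) P 1 ≤ exp (a j))
    {A : ℝ} (hA : ∀ n, ∑ j ∈ range n, a j ≤ A) (ε : ℝ) :
    P (⋃ n, {ω | ε ≤ ∑ j ∈ range n, X j ω}) ≤ ENNReal.ofReal (exp (A - ε)) := by
  have hmono : Monotone fun n => {ω | ε ≤ ∑ j ∈ range n, X j ω} := fun m n hmn ω hω =>
    hω.trans (sum_le_sum_of_subset_of_nonneg (range_subset_range.2 hmn) fun j _ _ => hnonneg j ω)
  rw [hmono.measure_iUnion]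
  exact iSup_le fun n => (hX.measure_ge_sum_range_le hmeas hint hmgf n ε).trans
    (ENNReal.ofReal_le_ofReal (exp_le_exp.2 (by linarith [hA n])))

lemma one_sub_sub_measure_le_measure_tsum_le [IsProbabilityMeasure P]
    (hnonneg : ∀ j ω, 0 ≤ X j ω) (Y : Ω → ℝ) (c : ℝ) :
    1 - P {ω | Y ω < c} - P (⋃ n, {ω | c ≤ ∑ j ∈ range n, X j ω}) ≤
      P {ω | ∑' j, X j ω ≤ Y ω} := by
  have hcover : Set.univ ⊆ {ω | ∑' j, X j ω ≤ Y ω} ∪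
      (⋃ n, {ω | c ≤ ∑ j ∈ range n, X j ω}) ∪ {ω | Y ω < c} := by
    intro ω _
    by_contra hω
    simp only [Set.mem_union, Set.mem_ofPred_eq, Set.mem_iUnion, not_or, not_exists, not_lt,
      not_le] at hω
    obtain ⟨⟨hsum, hpartial⟩, hY⟩ := hω
    exact hsum.not_ge ((Real.tsum_le_of_sum_range_le (hnonneg · ω)
      fun n => (hpartial n).le).trans hY)
  rw [tsub_le_iff_right, tsub_le_iff_right, ← measure_univ (μ := P)]
  calc P Set.univ ≤ _ := measure_mono hcover
    _ ≤ _ := (measure_union_le _ _).trans (add_le_add_left (measure_union_le _ _) _)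

end SeriesTail

end ProbabilityTheory

section GeometricWeights

variable {r : ℝ}

lemma pow_succ_mul_exp_sub_one_nonneg (hr : 0 ≤ r) (j : ℕ) :
    0 ≤ r ^ (j + 1) * (exp ((j : ℝ) + 2) - 1) :=
  mul_nonneg (by positivity) (sub_nonneg.2 (one_le_exp (by positivity)))

lemma summable_pow_succ_mul_exp_sub_one (hr0 : 0 ≤ r) (hr1 : r < exp (-1)) :
    Summable fun j : ℕ => r ^ (j + 1) * (exp (j + 2) - 1) := by
  have hre : r * exp 1 < 1 := by
    simpa [← exp_add] using mul_lt_mul_of_pos_right hr1 (exp_pos 1)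
  refine Summable.of_nonneg_of_le (pow_succ_mul_exp_sub_one_nonneg hr0) (fun j => ?_)
    ((summable_geometric_of_lt_one (by positivity) hre).mul_left (r * exp 2))
  calc r ^ (j + 1) * (exp (j + 2) - 1) ≤ r ^ (j + 1) * exp (j + 2) := by
        gcongr; linarith
    _ = r * exp 2 * (r * exp 1) ^ j := by
        rw [exp_add, mul_pow, ← exp_nat_mul, mul_one]; ring

lemma sum_range_pow_succ_mul_exp_sub_one_le_tsum (hr0 : 0 ≤ r) (hr1 : r < exp (-1)) (n : ℕ) :
    ∑ j ∈ range n, r ^ (j + 1) * (exp (j + 2) - 1) ≤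
      ∑' j : ℕ, r ^ (j + 1) * (exp (j + 2) - 1) :=
  (summable_pow_succ_mul_exp_sub_one hr0 hr1).sum_le_tsum _ fun j _ =>
    pow_succ_mul_exp_sub_one_nonneg hr0 j

end GeometricWeights

/-- `N_i` for `i ≥ 2` is represented by `Ns (i - 2)`, i.e. `Ns j` stands for `N_{j+2}`. -/
theorem sum_small_poissons_le_poisson
    {Ω : Type*} [MeasurableSpace Ω] (P : Measure Ω) [IsProbabilityMeasure P]
    (l r : ℝ) (hl : 0 < l) (hr0 : 0 < r) (hr1 : r < Real.exp (-1))
    (hrsum : ∑' j : ℕ, r ^ (j + 1) * (Real.exp (j + 2) - 1) ≤ 1 / 4)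
    (N : Ω → ℕ) (Ns : ℕ → Ω → ℕ) (μs : ℕ → ℝ) (hμ0 : ∀ j, 0 ≤ μs j)
    (hμ : ∀ j : ℕ, μs j ≤ l * r ^ (j + 1))
    (hmeasN : Measurable N) (hmeasNs : ∀ j, Measurable (Ns j))
    (hindep : iIndepFun
      (fun o : Option ℕ => o.elim N Ns) P)
    (hpoisN : ∀ k : ℕ, P {ω | N ω = k} =
      ENNReal.ofReal (Real.exp (-l) * l ^ k / (Nat.factorial k)))
    (hpoisNs : ∀ j k : ℕ, P {ω | Ns j ω = k} =
      ENNReal.ofReal (Real.exp (-μs j) * (μs j) ^ k / (Nat.factorial k))) :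
    P {ω | ∑' j : ℕ, ((j : ℝ) + 2) * (Ns j ω : ℝ) ≤ (N ω : ℝ)} ≥
      1 - ENNReal.ofReal (Real.exp (-l / 8)) - ENNReal.ofReal (Real.exp (-l / 4)) := by
  let X : ℕ → Ω → ℝ := fun j ω => ((j : ℝ) + 2) * (Ns j ω : ℝ)
  have hlawN := hasLaw_poissonMeasure_of_measure_eq hmeasN hl.le hpoisN
  have hlawNs j := hasLaw_poissonMeasure_of_measure_eq (hmeasNs j) (hμ0 j) (hpoisNs j)
  have hX : iIndepFun X P := (hindep.precomp (Option.some_injective ℕ)).comp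
    (fun j (k : ℕ) => ((j : ℝ) + 2) * k) fun _ => measurable_from_nat
  have hmgf j : mgf (X j) P 1 ≤ exp (l * r ^ (j + 1) * (exp (j + 2) - 1)) :=
    (hlawNs j).mgf_const_mul_le_of_poissonMeasure (by positivity)
      ((Real.coe_toNNReal _ (hμ0 j)).trans_le (hμ j))
  have hpartial n : ∑ j ∈ range n, l * r ^ (j + 1) * (exp (j + 2) - 1) ≤ l / 4 := by
    simp only [mul_assoc, ← mul_sum]
    nlinarith [sum_range_pow_succ_mul_exp_sub_one_le_tsum hr0.le hr1 n]
  have hupper := hX.measure_iUnion_ge_sum_range_le (fun j => by fun_prop) (fun j ω => by positivity)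
    (fun j => (hlawNs j).integrable_exp_mul_of_poissonMeasure (j + 2)) hmgf hpartial (l / 2)
  have hlower := hlawN.measure_lt_half_le_of_poissonMeasure
  rw [show l / 4 - l / 2 = -l / 4 by ring] at hupper
  rw [Real.coe_toNNReal _ hl.le] at hlower
  exact (tsub_le_tsub (tsub_le_tsub_left hlower 1) hupper).trans
    (one_sub_sub_measure_le_measure_tsum_le (fun j ω => by positivity) _ _)
end
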